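/- Let Σ be a linearly ordered alphabet, let u : ℕ → Σ be an infinite word whose first letter is b, and let u' be the shift of u (u with its first letter removed, u'(n) = u(n+1)). If u is lexicographically strictly smaller than u', then the constant infinite word b^ω = bbb··· is lexicographically strictly smaller than u. -/

import Mathlib

/-- Lexicographic order on infinite words `ℕ → α`. -/
def InfLexLt {α : Type*} [LinearOrder α] (u v : ℕ → α) : Prop :=
  ∃ n : ℕ, (∀ m < n, u m = v m) ∧ u n < v n

theorem apply_eq_apply_zero_of_forall_lt_apply_eq_apply_succ {α : Type*} {u : ℕ → α} {n : ℕ}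
    (h : ∀ m < n, u m = u (m + 1)) : ∀ m ≤ n, u m = u 0 := by
  intro m hm
  induction m with
  | zero => rfl
  | succ k ih => rw [← h k hm, ih (Nat.le_of_succ_le hm)]

/-- If an infinite word `u` starting with the letter `b` is lexicographically strictly
smaller than its shift `u'` (given by `u' n = u (n+1)`), then the constant infinite word
`b^ω` is lexicographically strictly smaller than `u`. -/
theorem const_lt_of_lt_shift {α : Type*} [LinearOrder α]
    (u : ℕ → α) (b : α) (hb : u 0 = b)
    (h : InfLexLt u (fun n => u (n + 1))) :
    InfLexLt (fun _ => b) u := by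
  obtain ⟨n, hpre, hlt⟩ := h
  have hconst : ∀ m ≤ n, u m = b := fun m hm =>
    hb ▸ apply_eq_apply_zero_of_forall_lt_apply_eq_apply_succ hpre m hm
  refine ⟨n + 1, fun m hm => (hconst m (Nat.lt_succ_iff.mp hm)).symm, ?_⟩
  calc b = u n := (hconst n le_rfl).symm
    _ < u (n + 1) := hlt
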